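/- arXiv:0812.1719 — 4 statements merged into one kernel-verified Lean document; each statement's English description precedes it below -/
import Mathlib

section
/- Let (X_k)_{1≤k≤n} be independent and identically distributed real random variables with E[X_k] = 0, and S_n = X_1 + ⋯ + X_n. If E[exp(δ|X_1|)] < ∞ for some δ > 0, then there exists c = c(δ, E[exp(δ|X_1|)]) > 0 such that for all x > 0: P[S_n/n > x] ≤ exp(−n c x²) if 0 < x ≤ 1 and P[S_n/n > x] ≤ exp(−n c x) if x > 1, and the same bounds hold for P[−S_n/n > x]. Conversely, if for some n ≥ 1, c > 0, x_0 > 0 and all x > x_0 one has P[S_n/n > x] ≤ exp(−n c x) and P[−S_n/n > x] ≤ exp(−n c x), then E[exp(δ|X_1|)] < ∞ for each δ ∈ (0, c). -/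
open MeasureTheory ProbabilityTheory Filter

/-!
If `E[X] = 0` and `E[exp (δ|X|)] ≤ M`, then `exp u ≤ 1 + u + u² exp |u|` together with
`x² ≤ 8 δ⁻² exp (δ|x|/2)` gives `E[exp (tX)] ≤ exp (8 M t² / δ²)` for `|t| ≤ δ/2`. The Chernoff
bound for the i.i.d. sum then yields `P[S_n/n > x] ≤ exp (-n (t x - 8 M t² / δ²))`, and the
choice `t = t₀ min 1 x` with `t₀ = min (δ/2) (δ²/(16 M))` makes the exponent at least
`n t₀ min x x² / 2`. The lower tail is the upper tail of `-X`.

Conversely, `S_n - X_1` is independent of `X_1` and lies in `[-a, a]` with probability at least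
`1/2` for some `a`, so `P[|X_1| > t] ≤ 2 P[|S_n| > t - a]` has an exponential tail of rate `c`.
By the layer-cake formula, `E[exp (δ|X_1|)] - 1 = ∫₀^∞ δ e^{δt} P[|X_1| > t] dt`, which is
finite for `δ < c`.
-/

open Real

lemma Real.exp_le_one_add_add_sq_mul_exp_abs (u : ℝ) : exp u ≤ 1 + u + u ^ 2 * exp |u| := by
  have h : ‖((exp u - (1 + u) : ℝ) : ℂ)‖ ≤ u ^ 2 * exp |u| := by
    push_cast
    simpa [Finset.sum_range_succ] using Complex.norm_exp_sub_sum_le_norm_mul_exp (u : ℂ) 2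
  rw [Complex.norm_real, Real.norm_eq_abs] at h
  linarith [le_abs_self (exp u - (1 + u))]

lemma Real.exp_mul_le_one_add_add_sq_mul_exp_abs {δ t : ℝ} (hδ : 0 < δ) (ht : |t| ≤ δ / 2)
    (x : ℝ) : exp (t * x) ≤ 1 + t * x + 8 / δ ^ 2 * t ^ 2 * exp (δ * |x|) := by
  have hx_sq : x ^ 2 ≤ 8 / δ ^ 2 * exp (δ * |x| / 2) :=
    calc x ^ 2 = 8 / δ ^ 2 * ((δ * |x| / 2) ^ 2 / Nat.factorial 2) := by
          rw [Nat.factorial_two, Nat.cast_two, div_pow, mul_pow, sq_abs]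
          field_simp
          ring
      _ ≤ 8 / δ ^ 2 * exp (δ * |x| / 2) := by
          gcongr
          exact pow_div_factorial_le_exp _ (by positivity) 2
  have h_abs : |t * x| ≤ δ * |x| / 2 := by
    rw [abs_mul]
    nlinarith [abs_nonneg x]
  calc exp (t * x) ≤ 1 + t * x + t ^ 2 * x ^ 2 * exp |t * x| := by
        simpa [mul_pow] using exp_le_one_add_add_sq_mul_exp_abs (t * x)
    _ ≤ 1 + t * x + t ^ 2 * (8 / δ ^ 2 * exp (δ * |x| / 2)) * exp (δ * |x| / 2) := by
        gcongr
    _ = 1 + t * x + 8 / δ ^ 2 * t ^ 2 * (exp (δ * |x| / 2) * exp (δ * |x| / 2)) := by ring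
    _ = 1 + t * x + 8 / δ ^ 2 * t ^ 2 * exp (δ * |x|) := by
        rw [← exp_add, add_halves]

lemma exists_mul_sub_mul_sq_ge {C t₀ x : ℝ} (ht₀ : 0 ≤ t₀) (hCt₀ : C * t₀ ≤ 1 / 2)
    (hx : 0 < x) : ∃ t, 0 ≤ t ∧ t ≤ t₀ ∧ t₀ / 2 * min x (x ^ 2) ≤ t * x - C * t ^ 2 := by
  have hgap : 0 ≤ 1 / 2 - C * t₀ := by linarith
  rcases le_or_gt x 1 with hx1 | hx1
  · refine ⟨t₀ * x, by positivity, mul_le_of_le_one_right ht₀ hx1, ?_⟩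
    rw [min_eq_right (by nlinarith)]
    nlinarith [mul_nonneg (mul_nonneg ht₀ (sq_nonneg x)) hgap]
  · refine ⟨t₀, ht₀, le_rfl, ?_⟩
    rw [min_eq_left (by nlinarith)]
    nlinarith [mul_nonneg ht₀ hgap]

noncomputable def bernsteinConst (δ M : ℝ) : ℝ := min (δ / 2) (δ ^ 2 / (16 * M)) / 2

lemma bernsteinConst_pos {δ M : ℝ} (hδ : 0 < δ) (hM : 0 < M) : 0 < bernsteinConst δ M := by
  unfold bernsteinConst
  positivity

section

variable {Ω : Type*} {m0 : MeasurableSpace Ω} {μ : Measure Ω}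

lemma integrable_exp_mul_of_integrable_exp_abs {Y : Ω → ℝ} {δ t : ℝ} (hY : AEMeasurable Y μ)
    (hexp : Integrable (fun ω => exp (δ * |Y ω|)) μ) (ht : |t| ≤ δ) :
    Integrable (fun ω => exp (t * Y ω)) μ := by
  refine hexp.mono' (aemeasurable_exp_mul t hY) (ae_of_all _ fun ω => ?_)
  rw [norm_of_nonneg (exp_nonneg _), exp_le_exp]
  calc t * Y ω ≤ |t| * |Y ω| := by rw [← abs_mul]; exact le_abs_self _
    _ ≤ δ * |Y ω| := by gcongr

lemma integrable_and_integral_le_of_lintegral_le {f : Ω → ℝ} (hf : AEStronglyMeasurable f μ)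
    (hf0 : 0 ≤ f) {M : ℝ} (hM0 : 0 ≤ M) (hM : ∫⁻ ω, ENNReal.ofReal (f ω) ∂μ ≤ ENNReal.ofReal M) :
    Integrable f μ ∧ ∫ ω, f ω ∂μ ≤ M := by
  have hlt : ∫⁻ ω, ENNReal.ofReal (f ω) ∂μ < ⊤ := hM.trans_lt ENNReal.ofReal_lt_top
  refine ⟨⟨hf, (hasFiniteIntegral_iff_ofReal (ae_of_all _ hf0)).2 hlt⟩, ?_⟩
  rw [integral_eq_lintegral_of_nonneg_ae (ae_of_all _ hf0) hf]
  exact ENNReal.toReal_le_of_le_ofReal hM0 hM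

lemma mgf_le_exp_mul_sq [IsProbabilityMeasure μ] {Y : Ω → ℝ} (hY : Integrable Y μ)
    (hmean : μ[Y] = 0) {δ M t : ℝ} (hδ : 0 < δ) (hexp : Integrable (fun ω => exp (δ * |Y ω|)) μ)
    (hM : ∫ ω, exp (δ * |Y ω|) ∂μ ≤ M) (ht : |t| ≤ δ / 2) :
    mgf Y μ t ≤ exp (8 * M / δ ^ 2 * t ^ 2) := by
  have hlin : Integrable (fun ω => 1 + t * Y ω) μ := (integrable_const 1).add (hY.const_mul t)
  have hquad : Integrable (fun ω => 1 + t * Y ω + 8 / δ ^ 2 * t ^ 2 * exp (δ * |Y ω|)) μ :=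
    hlin.add (hexp.const_mul _)
  calc mgf Y μ t
      ≤ ∫ ω, (1 + t * Y ω + 8 / δ ^ 2 * t ^ 2 * exp (δ * |Y ω|)) ∂μ :=
        integral_mono (integrable_exp_mul_of_integrable_exp_abs hY.aemeasurable hexp
          (by linarith [abs_nonneg t])) hquad
          (fun ω => exp_mul_le_one_add_add_sq_mul_exp_abs hδ ht _)
    _ = 1 + 8 / δ ^ 2 * t ^ 2 * ∫ ω, exp (δ * |Y ω|) ∂μ := by
        rw [integral_add hlin (hexp.const_mul _),
          integral_add (integrable_const 1) (hY.const_mul t), integral_const_mul,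
          integral_const_mul, hmean]
        simp
    _ ≤ 1 + 8 / δ ^ 2 * t ^ 2 * M := by gcongr
    _ = 1 + 8 * M / δ ^ 2 * t ^ 2 := by ring
    _ ≤ exp (8 * M / δ ^ 2 * t ^ 2) := by linarith [add_one_le_exp (8 * M / δ ^ 2 * t ^ 2)]

lemma ProbabilityTheory.iIndepFun.measureReal_sum_ge_le [IsFiniteMeasure μ] {ι : Type*}
    [Fintype ι] {X : ι → Ω → ℝ} (hindep : iIndepFun X μ) (hmeas : ∀ i, Measurable (X i))
    {t K : ℝ} (ht : 0 ≤ t)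
    (hint : ∀ i, Integrable (fun ω => exp (t * X i ω)) μ) (hmgf : ∀ i, mgf (X i) μ t ≤ exp K)
    (ε : ℝ) :
    μ.real {ω | ε ≤ ∑ i, X i ω} ≤ exp (-(t * ε) + Fintype.card ι * K) := by
  have hchernoff := measure_ge_le_exp_mul_mgf (X := ∑ i, X i) (μ := μ) ε ht
    (hindep.integrable_exp_mul_sum hmeas fun i _ => hint i)
  simp only [Finset.sum_apply] at hchernoff
  calc μ.real {ω | ε ≤ ∑ i, X i ω} ≤ exp (-t * ε) * mgf (∑ i, X i) μ t := hchernoff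
    _ ≤ exp (-t * ε) * exp K ^ Fintype.card ι := by
        rw [hindep.mgf_sum hmeas, ← Finset.card_univ, ← Finset.prod_const]
        gcongr with i
        · exact fun i _ => mgf_nonneg
        · exact hmgf i
    _ = exp (-(t * ε) + Fintype.card ι * K) := by rw [← exp_nat_mul, ← exp_add]; ring_nf

lemma measure_sum_div_gt_le [IsProbabilityMeasure μ] {n : ℕ} (hn : 1 ≤ n) {X : ℕ → Ω → ℝ}
    (hmeas : ∀ i, Measurable (X i))
    (hindep : iIndepFun (fun i : Finset.Icc 1 n => X i) μ)
    (hident : ∀ i ∈ Finset.Icc 1 n, IdentDistrib (X i) (X 1) μ μ)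
    (hint : Integrable (X 1) μ) (hmean : μ[X 1] = 0) {δ M : ℝ} (hδ : 0 < δ)
    (hexp : Integrable (fun ω => exp (δ * |X 1 ω|)) μ) (hM : ∫ ω, exp (δ * |X 1 ω|) ∂μ ≤ M)
    {t : ℝ} (ht0 : 0 ≤ t) (ht : t ≤ δ / 2) (x : ℝ) :
    μ {ω | (∑ k ∈ Finset.Icc 1 n, X k ω) / n > x} ≤
      ENNReal.ofReal (exp (-(n * (t * x - 8 * M / δ ^ 2 * t ^ 2)))) := by
  have ht_abs : |t| ≤ δ / 2 := by rwa [abs_of_nonneg ht0]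
  have hsum := hindep.measureReal_sum_ge_le (fun i => hmeas i) ht0
    (fun i => ((hident i i.2).comp (measurable_const_mul t).exp).integrable_iff.2
      (integrable_exp_mul_of_integrable_exp_abs hint.aemeasurable hexp (by linarith)))
    (fun i => (mgf_congr_of_identDistrib _ _ (hident i i.2) t).trans_le
      (mgf_le_exp_mul_sq hint hmean hδ hexp hM ht_abs))
    (n * x)
  have hcoe (ω : Ω) : ∑ i : Finset.Icc 1 n, X i ω = ∑ k ∈ Finset.Icc 1 n, X k ω :=
    Finset.sum_coe_sort (Finset.Icc 1 n) (fun k => X k ω)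
  simp only [hcoe, Fintype.card_coe, Nat.card_Icc, add_tsub_cancel_right] at hsum
  have hn_pos : (0 : ℝ) < n := by exact_mod_cast hn
  calc μ {ω | (∑ k ∈ Finset.Icc 1 n, X k ω) / n > x}
      ≤ μ {ω | n * x ≤ ∑ k ∈ Finset.Icc 1 n, X k ω} := measure_mono fun ω hω => by
        simp only [Set.mem_ofPred_eq, gt_iff_lt, lt_div_iff₀ hn_pos] at hω ⊢
        linarith
    _ ≤ ENNReal.ofReal (exp (-(n * (t * x - 8 * M / δ ^ 2 * t ^ 2)))) := by
        rw [← ENNReal.ofReal_toReal (measure_ne_top μ _)]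
        refine ENNReal.ofReal_le_ofReal (hsum.trans_eq ?_)
        ring_nf

lemma sum_div_tails_le_bernstein [IsProbabilityMeasure μ] {n : ℕ} (hn : 1 ≤ n) {X : ℕ → Ω → ℝ}
    (hmeas : ∀ i, Measurable (X i)) (hindep : iIndepFun (fun i : Finset.Icc 1 n => X i) μ)
    (hident : ∀ i ∈ Finset.Icc 1 n, IdentDistrib (X i) (X 1) μ μ)
    (hint : Integrable (X 1) μ) (hmean : μ[X 1] = 0) {δ M : ℝ} (hδ : 0 < δ) (hM0 : 0 < M)
    (hexpM : ∫⁻ ω, ENNReal.ofReal (exp (δ * |X 1 ω|)) ∂μ ≤ ENNReal.ofReal M) {x : ℝ} (hx : 0 < x) :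
    μ {ω | (∑ k ∈ Finset.Icc 1 n, X k ω) / n > x} ≤
        ENNReal.ofReal (exp (-(n * bernsteinConst δ M * min x (x ^ 2)))) ∧
      μ {ω | -((∑ k ∈ Finset.Icc 1 n, X k ω) / n) > x} ≤
        ENNReal.ofReal (exp (-(n * bernsteinConst δ M * min x (x ^ 2)))) := by
  obtain ⟨hexp, hM⟩ := integrable_and_integral_le_of_lintegral_le
    (by fun_prop : Measurable fun ω => exp (δ * |X 1 ω|)).aestronglyMeasurable
    (fun ω => (exp_pos _).le) hM0.le hexpM
  have hrate : 8 * M / δ ^ 2 * min (δ / 2) (δ ^ 2 / (16 * M)) ≤ 1 / 2 :=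
    calc 8 * M / δ ^ 2 * min (δ / 2) (δ ^ 2 / (16 * M))
        ≤ 8 * M / δ ^ 2 * (δ ^ 2 / (16 * M)) := by gcongr; exact min_le_right _ _
      _ = 1 / 2 := by field_simp; norm_num
  obtain ⟨t, ht0, ht, hgain⟩ := exists_mul_sub_mul_sq_ge (by positivity) hrate hx
  have hmono : ENNReal.ofReal (exp (-(n * (t * x - 8 * M / δ ^ 2 * t ^ 2)))) ≤
      ENNReal.ofReal (exp (-(n * bernsteinConst δ M * min x (x ^ 2)))) := by
    refine ENNReal.ofReal_le_ofReal (exp_le_exp.2 (neg_le_neg ?_))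
    rw [mul_assoc]
    exact mul_le_mul_of_nonneg_left hgain n.cast_nonneg
  have ht' : t ≤ δ / 2 := ht.trans (min_le_left _ _)
  refine ⟨(measure_sum_div_gt_le hn hmeas hindep hident hint hmean hδ hexp hM ht0 ht' x).trans
    hmono, ?_⟩
  have hneg := measure_sum_div_gt_le (X := fun k ω => -X k ω) hn (fun i => (hmeas i).neg)
    (hindep.comp (fun _ => Neg.neg) fun _ => measurable_neg)
    (fun i hi => (hident i hi).comp measurable_neg) hint.neg (by simp [integral_neg, hmean]) hδ
    (by simpa using hexp) (by simpa using hM) ht0 ht' x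
  simp only [Finset.sum_neg_distrib, neg_div] at hneg
  exact hneg.trans hmono

lemma measure_lt_le_mul_exp_of_forall_gt [IsProbabilityMeasure μ] {f : Ω → ℝ} {B c T : ℝ}
    (hB : 1 ≤ B) (hc : 0 ≤ c) (hT : 0 ≤ T)
    (h : ∀ t, T < t → μ {ω | t < f ω} ≤ ENNReal.ofReal (B * exp (-(c * t)))) (t : ℝ) :
    μ {ω | t < f ω} ≤ ENNReal.ofReal (B * exp (c * T) * exp (-(c * t))) := by
  rcases le_or_gt t T with htT | hTt
  · calc μ {ω | t < f ω} ≤ ENNReal.ofReal 1 := ENNReal.ofReal_one ▸ prob_le_one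
      _ ≤ ENNReal.ofReal (B * exp (c * T) * exp (-(c * t))) := by
        rw [mul_assoc, ← exp_add]
        gcongr
        nlinarith [one_le_exp (show 0 ≤ c * T + -(c * t) by nlinarith)]
  · refine (h t hTt).trans (ENNReal.ofReal_le_ofReal ?_)
    have := one_le_exp (mul_nonneg hc hT)
    gcongr
    nlinarith

lemma exists_half_le_measure_abs_le [IsProbabilityMeasure μ] {Z : Ω → ℝ}
    (hZ : AEMeasurable Z μ) : ∃ a, 2⁻¹ ≤ μ {ω | |Z ω| ≤ a} := by
  have := Measure.isProbabilityMeasure_map (μ := μ) hZ.abs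
  have h := tendsto_measure_Iic_atTop (μ.map fun ω => |Z ω|)
  rw [measure_univ] at h
  obtain ⟨a, ha⟩ := (h.eventually (eventually_ge_nhds (by norm_num : (2⁻¹ : ENNReal) < 1))).exists
  exact ⟨a, by rwa [Measure.map_apply_of_aemeasurable hZ.abs measurableSet_Iic] at ha⟩

lemma ProbabilityTheory.IndepFun.measure_lt_abs_le_two_mul {Y Z : Ω → ℝ} (h : IndepFun Y Z μ)
    {a : ℝ} (ha : 2⁻¹ ≤ μ {ω | |Z ω| ≤ a}) (t : ℝ) :
    μ {ω | t < |Y ω|} ≤ 2 * μ {ω | t - a < |Y ω + Z ω|} := by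
  have hprod : μ ({ω | t < |Y ω|} ∩ {ω | |Z ω| ≤ a}) = μ {ω | t < |Y ω|} * μ {ω | |Z ω| ≤ a} :=
    h.measure_inter_preimage_eq_mul {y | t < |y|} {z | |z| ≤ a}
      (measurableSet_lt measurable_const measurable_abs)
      (measurableSet_le measurable_abs measurable_const)
  have hsub : {ω | t < |Y ω|} ∩ {ω | |Z ω| ≤ a} ⊆ {ω | t - a < |Y ω + Z ω|} := by
    rintro ω ⟨hY, hZ⟩
    have htriangle := abs_add_le (Y ω + Z ω) (-Z ω)
    simp only [add_neg_cancel_right, abs_neg] at htriangle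
    simp only [Set.mem_ofPred_eq] at hY hZ ⊢
    linarith
  calc μ {ω | t < |Y ω|} = 2 * (μ {ω | t < |Y ω|} * 2⁻¹) := by
        rw [mul_comm, mul_assoc, ENNReal.inv_mul_cancel two_ne_zero ENNReal.ofNat_ne_top,
          mul_one]
    _ ≤ 2 * μ {ω | t - a < |Y ω + Z ω|} := by
        gcongr
        exact (mul_le_mul_right ha _).trans (hprod ▸ measure_mono hsub)

lemma lintegral_exp_mul_abs_lt_top [IsFiniteMeasure μ] {W : Ω → ℝ} (hW : AEMeasurable W μ)
    {B c δ : ℝ} (hδ : 0 < δ) (hδc : δ < c)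
    (h : ∀ t, μ {ω | t < |W ω|} ≤ ENNReal.ofReal (B * exp (-(c * t)))) :
    ∫⁻ ω, ENNReal.ofReal (exp (δ * |W ω|)) ∂μ < ⊤ := by
  have hprimitive (s : ℝ) : ∫ t in 0..s, δ * exp (δ * t) = exp (δ * s) - 1 := by
    rw [intervalIntegral.integral_const_mul, intervalIntegral.mul_integral_comp_mul_left,
      integral_exp, mul_zero, exp_zero]
  have hlayer := lintegral_comp_eq_lintegral_meas_lt_mul μ (f := fun ω => |W ω|)
    (g := fun t => δ * exp (δ * t)) (ae_of_all _ fun ω => abs_nonneg _) hW.abs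
    (fun t _ => (by fun_prop : Continuous fun t => δ * exp (δ * t)).intervalIntegrable _ _)
    (ae_of_all _ fun t => by positivity)
  simp only [hprimitive] at hlayer
  have htail : ∫⁻ t in Set.Ioi 0, μ {ω | t < |W ω|} * ENNReal.ofReal (δ * exp (δ * t)) < ⊤ := by
    refine lt_of_le_of_lt (lintegral_mono fun t => ?_)
      (((integrableOn_exp_mul_Ioi (sub_neg.2 hδc) 0).const_mul (B * δ)).lintegral_lt_top)
    calc μ {ω | t < |W ω|} * ENNReal.ofReal (δ * exp (δ * t))
        ≤ ENNReal.ofReal (B * exp (-(c * t))) * ENNReal.ofReal (δ * exp (δ * t)) := by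
          gcongr; exact h t
      _ = ENNReal.ofReal (B * δ * exp ((δ - c) * t)) := by
          rw [← ENNReal.ofReal_mul' (by positivity), sub_mul, sub_eq_add_neg, exp_add]
          ring_nf
  calc ∫⁻ ω, ENNReal.ofReal (exp (δ * |W ω|)) ∂μ
      ≤ ∫⁻ ω, (ENNReal.ofReal (exp (δ * |W ω|) - 1) + 1) ∂μ := lintegral_mono fun ω => by
        simpa using ENNReal.ofReal_add_le (p := exp (δ * |W ω|) - 1) (q := 1)
    _ = ∫⁻ ω, ENNReal.ofReal (exp (δ * |W ω|) - 1) ∂μ + μ Set.univ := by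
        rw [lintegral_add_right _ measurable_const, lintegral_one]
    _ < ⊤ := ENNReal.add_lt_top.2 ⟨hlayer ▸ htail, measure_lt_top μ _⟩

lemma measure_lt_abs_le_of_tails_div {f : Ω → ℝ} {r c x₀ : ℝ} (hr : 0 < r)
    (h : ∀ x, x₀ < x →
      μ {ω | f ω / r > x} ≤ ENNReal.ofReal (exp (-(r * c * x))) ∧
      μ {ω | -(f ω / r) > x} ≤ ENNReal.ofReal (exp (-(r * c * x))))
    (s : ℝ) (hs : r * x₀ < s) :
    μ {ω | s < |f ω|} ≤ ENNReal.ofReal (2 * exp (-(c * s))) := by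
  have hx₀ : x₀ < s / r := by rwa [lt_div_iff₀' hr]
  have hexponent : r * c * (s / r) = c * s := by field_simp
  have hsub : {ω | s < |f ω|} ⊆ {ω | f ω / r > s / r} ∪ {ω | -(f ω / r) > s / r} := by
    intro ω hω
    simp only [Set.mem_union, Set.mem_ofPred_eq, gt_iff_lt, ← neg_div,
      div_lt_div_iff_of_pos_right hr] at hω ⊢
    exact lt_abs.1 hω
  obtain ⟨hpos, hneg⟩ := h (s / r) hx₀
  rw [hexponent] at hpos hneg
  calc μ {ω | s < |f ω|} ≤ μ {ω | f ω / r > s / r} + μ {ω | -(f ω / r) > s / r} :=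
        (measure_mono hsub).trans (measure_union_le _ _)
    _ ≤ ENNReal.ofReal (2 * exp (-(c * s))) := by
        rw [two_mul, ENNReal.ofReal_add (exp_pos _).le (exp_pos _).le]
        exact add_le_add hpos hneg

lemma lintegral_exp_mul_abs_lt_top_of_tails [IsProbabilityMeasure μ] {n : ℕ} (hn : 1 ≤ n)
    {X : ℕ → Ω → ℝ} (hmeas : ∀ i, Measurable (X i))
    (hindep : iIndepFun (fun i : Finset.Icc 1 n => X i) μ) {c x₀ : ℝ} (hc : 0 < c)
    (hx₀ : 0 ≤ x₀)
    (htail : ∀ x, x₀ < x →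
      μ {ω | (∑ k ∈ Finset.Icc 1 n, X k ω) / n > x} ≤ ENNReal.ofReal (exp (-(n * c * x))) ∧
      μ {ω | -((∑ k ∈ Finset.Icc 1 n, X k ω) / n) > x} ≤ ENNReal.ofReal (exp (-(n * c * x))))
    {δ : ℝ} (hδ : 0 < δ) (hδc : δ < c) :
    ∫⁻ ω, ENNReal.ofReal (exp (δ * |X 1 ω|)) ∂μ < ⊤ := by
  classical
  have hsum := measure_lt_le_mul_exp_of_forall_gt (by norm_num) hc.le (by positivity)
    (measure_lt_abs_le_of_tails_div (Nat.cast_pos.2 hn) htail)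
  let i₁ : Finset.Icc 1 n := ⟨1, Finset.mem_Icc.2 ⟨le_rfl, hn⟩⟩
  let Z := ∑ j ∈ Finset.univ.erase i₁, X j
  have hsplit (ω : Ω) : X 1 ω + Z ω = ∑ k ∈ Finset.Icc 1 n, X k ω := by
    change X 1 ω + (∑ j ∈ Finset.univ.erase i₁, X j) ω = _
    rw [Finset.sum_apply, Finset.add_sum_erase _ (fun j : Finset.Icc 1 n => X j ω)
      (Finset.mem_univ i₁)]
    exact Finset.sum_coe_sort (Finset.Icc 1 n) (fun k => X k ω)
  have hZ : IndepFun (X 1) Z μ :=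
    (hindep.indepFun_finsetSum_of_notMem (fun i => hmeas i) (Finset.notMem_erase i₁ _)).symm
  obtain ⟨a, ha⟩ := exists_half_le_measure_abs_le (μ := μ)
    (by fun_prop : Measurable Z).aemeasurable
  refine lintegral_exp_mul_abs_lt_top (hmeas 1).aemeasurable hδ hδc
    (B := 2 * (2 * exp (c * (n * x₀))) * exp (c * a)) fun t => ?_
  calc μ {ω | t < |X 1 ω|} ≤ 2 * μ {ω | t - a < |X 1 ω + Z ω|} := hZ.measure_lt_abs_le_two_mul ha t
    _ ≤ 2 * ENNReal.ofReal (2 * exp (c * (n * x₀)) * exp (-(c * (t - a)))) := by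
        simp only [hsplit]
        gcongr
        exact hsum _
    _ = ENNReal.ofReal (2 * (2 * exp (c * (n * x₀))) * exp (c * a) * exp (-(c * t))) := by
        rw [← ENNReal.ofReal_ofNat 2, ← ENNReal.ofReal_mul zero_le_two, mul_sub, neg_sub,
          sub_eq_add_neg, exp_add]
        ring_nf

end

/-- Bernstein-type inequality for i.i.d. centered random variables (Corollary 1.2):
a finite exponential moment `E[exp (δ |X₁|)] ≤ M` yields Gaussian/exponential deviation
bounds with a constant depending only on `δ` and `M`; conversely, a two-sided exponential
deviation bound of order `x` implies finite exponential moments of every order `δ < c`. -/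
theorem iid_bernstein_type_inequality :
    (∀ δ M : ℝ, 0 < δ → 0 < M →
      ∃ c : ℝ, 0 < c ∧
        ∀ {Ω : Type*} {m0 : MeasurableSpace Ω} (μ : Measure Ω), IsProbabilityMeasure μ →
        ∀ (n : ℕ) (X : ℕ → Ω → ℝ), 1 ≤ n →
          (∀ i, Measurable (X i)) →
          iIndepFun (m := fun _ : {i : ℕ // i ∈ Finset.Icc 1 n} => (inferInstance : MeasurableSpace ℝ))
            (fun i : {i : ℕ // i ∈ Finset.Icc 1 n} => X i) μ →
          (∀ i ∈ Finset.Icc 1 n, IdentDistrib (X i) (X 1) μ μ) →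
          Integrable (X 1) μ → (∫ ω, X 1 ω ∂μ) = 0 →
          (∫⁻ ω, ENNReal.ofReal (Real.exp (δ * |X 1 ω|)) ∂μ) ≤ ENNReal.ofReal M →
          ∀ x : ℝ, 0 < x →
            ((x ≤ 1 →
                μ {ω | (∑ k ∈ Finset.Icc 1 n, X k ω) / n > x} ≤
                  ENNReal.ofReal (Real.exp (-(n * c * x ^ 2))) ∧
                μ {ω | -((∑ k ∈ Finset.Icc 1 n, X k ω) / n) > x} ≤
                  ENNReal.ofReal (Real.exp (-(n * c * x ^ 2)))) ∧
              (1 < x →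
                μ {ω | (∑ k ∈ Finset.Icc 1 n, X k ω) / n > x} ≤
                  ENNReal.ofReal (Real.exp (-(n * c * x))) ∧
                μ {ω | -((∑ k ∈ Finset.Icc 1 n, X k ω) / n) > x} ≤
                  ENNReal.ofReal (Real.exp (-(n * c * x)))))) ∧
    (∀ {Ω : Type*} {m0 : MeasurableSpace Ω} (μ : Measure Ω), IsProbabilityMeasure μ →
      ∀ (n : ℕ) (X : ℕ → Ω → ℝ) (c x₀ : ℝ), 1 ≤ n → 0 < c → 0 < x₀ →
        (∀ i, Measurable (X i)) →
        iIndepFun (m := fun _ : {i : ℕ // i ∈ Finset.Icc 1 n} => (inferInstance : MeasurableSpace ℝ))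
          (fun i : {i : ℕ // i ∈ Finset.Icc 1 n} => X i) μ →
        (∀ i ∈ Finset.Icc 1 n, IdentDistrib (X i) (X 1) μ μ) →
        Integrable (X 1) μ → (∫ ω, X 1 ω ∂μ) = 0 →
        (∀ x : ℝ, x₀ < x →
          μ {ω | (∑ k ∈ Finset.Icc 1 n, X k ω) / n > x} ≤
            ENNReal.ofReal (Real.exp (-(n * c * x))) ∧
          μ {ω | -((∑ k ∈ Finset.Icc 1 n, X k ω) / n) > x} ≤
            ENNReal.ofReal (Real.exp (-(n * c * x)))) →
        ∀ δ : ℝ, 0 < δ → δ < c →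
          (∫⁻ ω, ENNReal.ofReal (Real.exp (δ * |X 1 ω|)) ∂μ) < ⊤) := by
  refine ⟨fun δ M hδ hM => ⟨bernsteinConst δ M, bernsteinConst_pos hδ hM, ?_⟩, ?_⟩
  · intro Ω _ μ _ n X hn hmeas hindep hident hint hmean hexp x hx
    obtain ⟨hpos, hneg⟩ :=
      sum_div_tails_le_bernstein hn hmeas hindep hident hint hmean hδ hM hexp hx
    refine ⟨fun hx1 => ?_, fun hx1 => ?_⟩
    · rw [min_eq_right (by nlinarith)] at hpos hneg
      exact ⟨hpos, hneg⟩
    · rw [min_eq_left (by nlinarith)] at hpos hneg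
      exact ⟨hpos, hneg⟩
  · intro Ω _ μ _ n X c x₀ hn hc hx₀ hmeas hindep _ _ _ htail δ hδ hδc
    exact lintegral_exp_mul_abs_lt_top_of_tails hn hmeas hindep hc hx₀.le htail hδ hδc
end

section
/- Let (X_k)_{1≤k≤n} be independent and identically distributed real random variables with S_n = X_1 + ⋯ + X_n. If P[S_n/n > x] ≤ exp(−n c x) for some n > 1, c > 0 and all x ≥ x_1 > 0, then for every δ ∈ (0, c), E[exp(δ X_1^+)] ≤ K, where X_1^+ = max(X_1, 0) and K = exp(δ x_1) + (δ/(c−δ)) exp(−(c−δ) x_1). -/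
/-!
If all `n` samples exceed `x`, so does their mean; by independence this gives
`P[X₁ > x] ^ n ≤ P[Sₙ / n > x] ≤ exp (-c x) ^ n`, i.e. the one-variable tail bound
`P[X₁ > x] ≤ exp (-c x)` for `x ≥ x₁`. Writing `exp (δ y) = 1 + ∫₀^y δ exp (δ t) dt`,
the layer cake formula gives `E[exp (δ X₁⁺)] = 1 + ∫₀^∞ δ exp (δ t) P[X₁ > t] dt`;
bounding the probability by `1` on `(0, x₁]` and by `exp (-c t)` on `(x₁, ∞)` yields
the two terms of `K`.
-/

open MeasureTheory ProbabilityTheory Filter Set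
open scoped Finset

lemma integral_mul_exp_mul (δ a : ℝ) :
    ∫ t in (0:ℝ)..a, δ * Real.exp (δ * t) = Real.exp (δ * a) - 1 := by
  rw [intervalIntegral.integral_eq_sub_of_hasDerivAt
    (f := fun t => Real.exp (δ * t)) (fun t _ => ?_)
    (Continuous.intervalIntegrable (by fun_prop) 0 a)]
  · simp
  · simpa [mul_comm] using ((hasDerivAt_id t).const_mul δ).exp

lemma lintegral_Ioc_mul_exp_mul {δ a : ℝ} (hδ : 0 ≤ δ) (ha : 0 ≤ a) :
    ∫⁻ t in Ioc 0 a, ENNReal.ofReal (δ * Real.exp (δ * t)) =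
      ENNReal.ofReal (Real.exp (δ * a) - 1) := by
  rw [← ofReal_integral_eq_lintegral_ofReal, ← intervalIntegral.integral_of_le ha,
    integral_mul_exp_mul]
  · exact (Continuous.intervalIntegrable (by fun_prop) 0 a).1
  · exact Eventually.of_forall fun t => by positivity

lemma lintegral_Ioi_exp_neg_mul {r : ℝ} (hr : 0 < r) (a : ℝ) :
    ∫⁻ t in Ioi a, ENNReal.ofReal (Real.exp (-(r * t))) =
      ENNReal.ofReal (Real.exp (-(r * a)) / r) := by
  rw [← ofReal_integral_eq_lintegral_ofReal]
  · simp_rw [← neg_mul]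
    rw [integral_exp_mul_Ioi (by linarith)]
    ring_nf
  · exact (by simpa only [neg_mul] using exp_neg_integrableOn_Ioi a hr : IntegrableOn _ (Ioi a))
  · exact Eventually.of_forall fun t => by positivity

namespace ProbabilityTheory

variable {Ω ι β : Type*} {m0 : MeasurableSpace Ω} {μ : Measure Ω}

lemma iIndepFun.measure_iInter_preimage_eq_pow [Fintype ι] [MeasurableSpace β]
    {X : ι → Ω → β} {Y : Ω → β} (hindep : iIndepFun X μ)
    (hident : ∀ i, IdentDistrib (X i) Y μ μ) {B : Set β} (hB : MeasurableSet B) :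
    μ (⋂ i, X i ⁻¹' B) = μ (Y ⁻¹' B) ^ Fintype.card ι := by
  rw [hindep.meas_iInter fun i => ⟨B, hB, rfl⟩,
    Finset.prod_congr rfl fun i _ => (hident i).measure_mem_eq hB, Finset.prod_const,
    Finset.card_univ]

lemma measure_preimage_Ioi_le_of_measure_mean_gt_le_pow {X : ι → Ω → ℝ} {Y : Ω → ℝ}
    {s : Finset ι} (hs : s.Nonempty) (hindep : iIndepFun (fun i : s => X i) μ)
    (hident : ∀ i ∈ s, IdentDistrib (X i) Y μ μ) {x : ℝ} {ε : ENNReal}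
    (hmean : μ {ω | x < (∑ i ∈ s, X i ω) / #s} ≤ ε ^ #s) :
    μ (Y ⁻¹' Ioi x) ≤ ε := by
  have hsub : (⋂ i : s, X i ⁻¹' Ioi x) ⊆ {ω | x < (∑ i ∈ s, X i ω) / #s} := by
    intro ω hω
    simp only [mem_iInter, mem_preimage, mem_Ioi, Subtype.forall] at hω
    rw [mem_ofPred_eq, ← Finset.expect_eq_sum_div_card]
    obtain ⟨i, hi⟩ := hs
    exact Finset.lt_expect (fun j hj => (hω j hj).le) ⟨i, hi, hω i hi⟩
  have hpow : μ (Y ⁻¹' Ioi x) ^ #s ≤ ε ^ #s := by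
    calc μ (Y ⁻¹' Ioi x) ^ #s
        = μ (⋂ i : s, X i ⁻¹' Ioi x) := by
          rw [hindep.measure_iInter_preimage_eq_pow (fun i => hident i i.2) measurableSet_Ioi,
            Fintype.card_coe]
      _ ≤ ε ^ #s := (measure_mono hsub).trans hmean
  exact (ENNReal.pow_le_pow_left_iff hs.card_pos.ne').mp hpow

section ExponentialMoment

variable [IsProbabilityMeasure μ] {Y : Ω → ℝ} {δ : ℝ}

lemma lintegral_exp_mul_max_eq_one_add (hY : AEMeasurable Y μ) (hδ : 0 ≤ δ) :
    ∫⁻ ω, ENNReal.ofReal (Real.exp (δ * max (Y ω) 0)) ∂μ =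
      1 + ∫⁻ t in Ioi 0, μ (Y ⁻¹' Ioi t) * ENNReal.ofReal (δ * Real.exp (δ * t)) := by
  have hsplit : ∀ ω, ENNReal.ofReal (Real.exp (δ * max (Y ω) 0)) =
      1 + ENNReal.ofReal (∫ t in (0:ℝ)..max (Y ω) 0, δ * Real.exp (δ * t)) := fun ω => by
    have : 1 ≤ Real.exp (δ * max (Y ω) 0) := Real.one_le_exp (by positivity)
    rw [integral_mul_exp_mul, ← ENNReal.ofReal_one,
      ← ENNReal.ofReal_add zero_le_one (by linarith), add_sub_cancel]
  have hlevel : ∀ t ∈ Ioi (0:ℝ), {ω | t < max (Y ω) 0} = Y ⁻¹' Ioi t := fun t ht => by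
    ext ω
    simp [not_lt.mpr (mem_Ioi.mp ht).le]
  rw [lintegral_congr hsplit, lintegral_add_left measurable_const, lintegral_one, measure_univ,
    lintegral_comp_eq_lintegral_meas_lt_mul μ (Eventually.of_forall fun ω => le_max_right _ _)
      (f := fun ω => max (Y ω) 0) (hY.max aemeasurable_const)
      (fun t _ => Continuous.intervalIntegrable (by fun_prop) 0 t)
      (Eventually.of_forall fun t => by positivity)]
  exact congrArg _ (setLIntegral_congr_fun measurableSet_Ioi fun t ht => by rw [hlevel t ht])

theorem lintegral_exp_mul_max_le_of_tail_le (hY : AEMeasurable Y μ) {c x₁ : ℝ} (hδ : 0 ≤ δ)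
    (hδc : δ < c) (hx₁ : 0 ≤ x₁)
    (htail : ∀ t, x₁ < t → μ (Y ⁻¹' Ioi t) ≤ ENNReal.ofReal (Real.exp (-(c * t)))) :
    ∫⁻ ω, ENNReal.ofReal (Real.exp (δ * max (Y ω) 0)) ∂μ ≤
      ENNReal.ofReal (Real.exp (δ * x₁) + δ / (c - δ) * Real.exp (-((c - δ) * x₁))) := by
  set w : ℝ → ENNReal := fun t => ENNReal.ofReal (δ * Real.exp (δ * t))
  have hlow : ∫⁻ t in Ioc 0 x₁, μ (Y ⁻¹' Ioi t) * w t ≤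
      ENNReal.ofReal (Real.exp (δ * x₁) - 1) :=
    calc ∫⁻ t in Ioc 0 x₁, μ (Y ⁻¹' Ioi t) * w t
        ≤ ∫⁻ t in Ioc 0 x₁, w t :=
          lintegral_mono fun t => mul_le_of_le_one_left zero_le prob_le_one
      _ = ENNReal.ofReal (Real.exp (δ * x₁) - 1) := lintegral_Ioc_mul_exp_mul hδ hx₁
  have hhigh : ∫⁻ t in Ioi x₁, μ (Y ⁻¹' Ioi t) * w t ≤
      ENNReal.ofReal (δ * (Real.exp (-((c - δ) * x₁)) / (c - δ))) :=
    calc ∫⁻ t in Ioi x₁, μ (Y ⁻¹' Ioi t) * w t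
        ≤ ∫⁻ t in Ioi x₁,
            ENNReal.ofReal δ * ENNReal.ofReal (Real.exp (-((c - δ) * t))) := by
          refine setLIntegral_mono' measurableSet_Ioi fun t ht => ?_
          calc μ (Y ⁻¹' Ioi t) * w t
              ≤ ENNReal.ofReal (Real.exp (-(c * t))) * w t := by
                gcongr
                exact htail t ht
            _ = ENNReal.ofReal δ * ENNReal.ofReal (Real.exp (-((c - δ) * t))) := by
              rw [← ENNReal.ofReal_mul (by positivity), ← ENNReal.ofReal_mul hδ,
                show -((c - δ) * t) = -(c * t) + δ * t by ring, Real.exp_add]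
              ring_nf
      _ = ENNReal.ofReal (δ * (Real.exp (-((c - δ) * x₁)) / (c - δ))) := by
          rw [lintegral_const_mul' _ _ ENNReal.ofReal_ne_top,
            lintegral_Ioi_exp_neg_mul (sub_pos.mpr hδc), ENNReal.ofReal_mul hδ]
  have hexp : 1 ≤ Real.exp (δ * x₁) := Real.one_le_exp (by positivity)
  calc ∫⁻ ω, ENNReal.ofReal (Real.exp (δ * max (Y ω) 0)) ∂μ
      = 1 + ((∫⁻ t in Ioc 0 x₁, μ (Y ⁻¹' Ioi t) * w t) +
          ∫⁻ t in Ioi x₁, μ (Y ⁻¹' Ioi t) * w t) := by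
        rw [lintegral_exp_mul_max_eq_one_add hY hδ, ← Ioc_union_Ioi_eq_Ioi hx₁,
          lintegral_union measurableSet_Ioi (Ioc_disjoint_Ioi le_rfl)]
    _ ≤ 1 + (ENNReal.ofReal (Real.exp (δ * x₁) - 1) +
          ENNReal.ofReal (δ * (Real.exp (-((c - δ) * x₁)) / (c - δ)))) := by gcongr
    _ = ENNReal.ofReal (Real.exp (δ * x₁) + δ / (c - δ) * Real.exp (-((c - δ) * x₁))) := by
        rw [← ENNReal.ofReal_add (by linarith) (by positivity), ← ENNReal.ofReal_one,
          ← ENNReal.ofReal_add zero_le_one (by positivity)]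
        congr 1
        ring

end ExponentialMoment

end ProbabilityTheory

theorem iid_exponential_moment_positive_part_general
    {Ω : Type*} {m0 : MeasurableSpace Ω} (μ : Measure Ω) [IsProbabilityMeasure μ]
    (n : ℕ) (hn : 1 < n) (X : ℕ → Ω → ℝ) (c x₁ : ℝ) (hx₁ : 0 < x₁)
    (hindep : iIndepFun (m := fun _ : {i : ℕ // i ∈ Finset.Icc 1 n} => (inferInstance : MeasurableSpace ℝ))
      (fun i : {i : ℕ // i ∈ Finset.Icc 1 n} => X i) μ)
    (hident : ∀ i ∈ Finset.Icc 1 n, IdentDistrib (X i) (X 1) μ μ)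
    (hdev : ∀ x : ℝ, x₁ ≤ x →
      μ {ω | (∑ k ∈ Finset.Icc 1 n, X k ω) / n > x} ≤ ENNReal.ofReal (Real.exp (-(n * c * x)))) :
    ∀ δ : ℝ, 0 < δ → δ < c →
      (∫⁻ ω, ENNReal.ofReal (Real.exp (δ * max (X 1 ω) 0)) ∂μ) ≤
        ENNReal.ofReal (Real.exp (δ * x₁) + δ / (c - δ) * Real.exp (-((c - δ) * x₁))) := by
  intro δ hδ hδc
  have h1 : 1 ∈ Finset.Icc 1 n := Finset.mem_Icc.mpr ⟨le_rfl, hn.le⟩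
  refine lintegral_exp_mul_max_le_of_tail_le (hident 1 h1).aemeasurable_fst hδ.le hδc hx₁.le
    fun t ht => measure_preimage_Ioi_le_of_measure_mean_gt_le_pow ⟨1, h1⟩ hindep hident ?_
  rw [Nat.card_Icc, Nat.add_sub_cancel, ← ENNReal.ofReal_pow (Real.exp_nonneg _),
    ← Real.exp_nat_mul, mul_neg, ← mul_assoc]
  exact hdev t ht.le

/-- Converse part of Theorem 2.1: a one-sided exponential deviation bound for i.i.d.
partial sums implies an explicit exponential moment bound for the positive part of `X 1`. -/
theorem iid_exponential_moment_positive_part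
    {Ω : Type*} {m0 : MeasurableSpace Ω} (μ : Measure Ω) [IsProbabilityMeasure μ]
    (n : ℕ) (hn : 1 < n) (X : ℕ → Ω → ℝ) (c x₁ : ℝ) (hc : 0 < c) (hx₁ : 0 < x₁)
    (hmeas : ∀ i, Measurable (X i))
    (hindep : iIndepFun (m := fun _ : {i : ℕ // i ∈ Finset.Icc 1 n} => (inferInstance : MeasurableSpace ℝ))
      (fun i : {i : ℕ // i ∈ Finset.Icc 1 n} => X i) μ)
    (hident : ∀ i ∈ Finset.Icc 1 n, IdentDistrib (X i) (X 1) μ μ)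
    (hdev : ∀ x : ℝ, x₁ ≤ x →
      μ {ω | (∑ k ∈ Finset.Icc 1 n, X k ω) / n > x} ≤ ENNReal.ofReal (Real.exp (-(n * c * x)))) :
    ∀ δ : ℝ, 0 < δ → δ < c →
      (∫⁻ ω, ENNReal.ofReal (Real.exp (δ * max (X 1 ω) 0)) ∂μ) ≤
        ENNReal.ofReal (Real.exp (δ * x₁) + δ / (c - δ) * Real.exp (-((c - δ) * x₁))) :=
  iid_exponential_moment_positive_part_general (m0 := m0) μ n hn X c x₁ hx₁ hindep hident hdev
end

section
/- Let X be a real-valued random variable with E[X] ≤ 0 and E[exp(|X|)] ≤ K for some K > 0. Then for all t ∈ (0,1), E[exp(tX)] ≤ exp(K t²/(1−t)). Consequently, E[exp(tX)] ≤ exp(2K t²) for every t ∈ (0, 1/2]. -/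
/-!
Expanding the exponential series, `exp (t x) - 1 - t x` is a sum over `n ≥ 2` of terms
`(t x)ⁿ / n!`, each at most `tⁿ exp |x|`; summing the geometric series gives
`exp (t x) ≤ 1 + t x + t² / (1 - t) · exp |x|` for `0 ≤ t < 1`. Taking expectations, the linear
term has nonpositive mean, so `E[exp (t X)] ≤ 1 + K t² / (1 - t) ≤ exp (K t² / (1 - t))`; for
`t ≤ 1/2` one has `1 / (1 - t) ≤ 2`.
-/

open MeasureTheory Filter

namespace Real

theorem exp_mul_le_one_add_mul_add_sq_div_mul_exp_abs {t : ℝ} (ht0 : 0 ≤ t) (ht1 : t < 1)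
    (x : ℝ) : exp (t * x) ≤ 1 + t * x + t ^ 2 / (1 - t) * exp |x| := by
  have hexp : HasSum (fun n : ℕ => (t * x) ^ n / n.factorial) (exp (t * x)) := by
    simpa [exp_eq_exp_ℝ, NormedSpace.exp_eq_tsum_div] using
      (summable_pow_div_factorial (t * x)).hasSum
  have hgeom : HasSum (fun n : ℕ => t ^ 2 * exp |x| * t ^ n) (t ^ 2 * exp |x| * (1 - t)⁻¹) :=
    (hasSum_geometric_of_lt_one ht0 ht1).mul_left _
  have hterm (n : ℕ) : (t * x) ^ (n + 2) / (n + 2).factorial ≤ t ^ 2 * exp |x| * t ^ n :=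
    calc (t * x) ^ (n + 2) / (n + 2).factorial
        ≤ |(t * x) ^ (n + 2) / (n + 2).factorial| := le_abs_self _
      _ = t ^ (n + 2) * (|x| ^ (n + 2) / (n + 2).factorial) := by
          rw [abs_div, abs_pow, abs_mul, abs_of_nonneg ht0, mul_pow, Nat.abs_cast, mul_div_assoc]
      _ ≤ t ^ (n + 2) * exp |x| := by gcongr; exact pow_div_factorial_le_exp _ (abs_nonneg x) _
      _ = t ^ 2 * exp |x| * t ^ n := by ring
  have htail := hasSum_le hterm ((hasSum_nat_add_iff' 2).mpr hexp) hgeom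
  norm_num [Finset.sum_range_succ] at htail
  rw [div_eq_mul_inv]
  linarith

end Real

section

variable {Ω : Type*} {m0 : MeasurableSpace Ω} {μ : Measure Ω} {X : Ω → ℝ}

theorem integrable_exp_mul_of_integrable_exp_abs_s9 (hX : AEStronglyMeasurable X μ)
    (hexp : Integrable (fun ω => Real.exp |X ω|) μ) {t : ℝ} (ht : |t| ≤ 1) :
    Integrable (fun ω => Real.exp (t * X ω)) μ := by
  refine hexp.mono (by fun_prop) (Eventually.of_forall fun ω => ?_)
  rw [Real.norm_of_nonneg (Real.exp_pos _).le, Real.norm_of_nonneg (Real.exp_pos _).le]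
  gcongr
  calc t * X ω ≤ |t| * |X ω| := by rw [← abs_mul]; exact le_abs_self _
    _ ≤ |X ω| := mul_le_of_le_one_left (abs_nonneg _) ht

theorem integral_exp_mul_le [IsProbabilityMeasure μ] (hX : Integrable X μ)
    (hexp : Integrable (fun ω => Real.exp |X ω|) μ) {t : ℝ} (ht0 : 0 ≤ t) (ht1 : t < 1) :
    ∫ ω, Real.exp (t * X ω) ∂μ ≤
      1 + t * ∫ ω, X ω ∂μ + t ^ 2 / (1 - t) * ∫ ω, Real.exp |X ω| ∂μ := by
  have hlin : Integrable (fun ω => 1 + t * X ω) μ := (integrable_const 1).add (hX.const_mul t)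
  calc ∫ ω, Real.exp (t * X ω) ∂μ
      ≤ ∫ ω, (1 + t * X ω + t ^ 2 / (1 - t) * Real.exp |X ω|) ∂μ :=
        integral_mono
          (integrable_exp_mul_of_integrable_exp_abs_s9 hX.1 hexp (by rw [abs_of_nonneg ht0]; linarith))
          (hlin.add (hexp.const_mul _))
          fun ω => Real.exp_mul_le_one_add_mul_add_sq_div_mul_exp_abs ht0 ht1 (X ω)
    _ = 1 + t * ∫ ω, X ω ∂μ + t ^ 2 / (1 - t) * ∫ ω, Real.exp |X ω| ∂μ := by
        rw [integral_add hlin (hexp.const_mul _), integral_add (integrable_const 1) (hX.const_mul t),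
          integral_const_mul, integral_const_mul]
        simp

theorem integrable_of_lintegral_ofReal_le {f : Ω → ℝ} (hf : AEStronglyMeasurable f μ)
    (hf0 : 0 ≤ᵐ[μ] f) {K : ℝ} (hK : ∫⁻ ω, ENNReal.ofReal (f ω) ∂μ ≤ ENNReal.ofReal K) :
    Integrable f μ :=
  ⟨hf, (hasFiniteIntegral_iff_ofReal hf0).mpr (hK.trans_lt ENNReal.ofReal_lt_top)⟩

theorem integral_le_of_lintegral_ofReal_le {f : Ω → ℝ} (hf : AEStronglyMeasurable f μ)
    (hf0 : 0 ≤ᵐ[μ] f) {K : ℝ} (hK0 : 0 ≤ K) (hK : ∫⁻ ω, ENNReal.ofReal (f ω) ∂μ ≤ ENNReal.ofReal K) :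
    ∫ ω, f ω ∂μ ≤ K := by
  rw [integral_eq_lintegral_of_nonneg_ae hf0 hf]
  exact ENNReal.toReal_le_of_le_ofReal hK0 hK

end

theorem laplace_transform_bound_of_exponential_moment_general
    {Ω : Type*} {m0 : MeasurableSpace Ω} (μ : Measure Ω) [IsProbabilityMeasure μ]
    (X : Ω → ℝ) (K : ℝ) (hK : 0 < K)
    (hint : Integrable X μ)
    (hmean : (∫ ω, X ω ∂μ) ≤ 0)
    (hexp : (∫⁻ ω, ENNReal.ofReal (Real.exp |X ω|) ∂μ) ≤ ENNReal.ofReal K) :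
    (∀ t : ℝ, t ∈ Set.Ioo (0 : ℝ) 1 →
      (∫⁻ ω, ENNReal.ofReal (Real.exp (t * X ω)) ∂μ) ≤
        ENNReal.ofReal (Real.exp (K * t ^ 2 / (1 - t)))) ∧
    (∀ t : ℝ, t ∈ Set.Ioc (0 : ℝ) (1 / 2) →
      (∫⁻ ω, ENNReal.ofReal (Real.exp (t * X ω)) ∂μ) ≤
        ENNReal.ofReal (Real.exp (2 * K * t ^ 2))) := by
  have hmeas : AEStronglyMeasurable (fun ω => Real.exp |X ω|) μ := by
    have := hint.aestronglyMeasurable; fun_prop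
  have hpos (f : Ω → ℝ) : 0 ≤ᵐ[μ] fun ω => Real.exp (f ω) :=
    Eventually.of_forall fun _ => (Real.exp_pos _).le
  have hexp_int := integrable_of_lintegral_ofReal_le hmeas (hpos _) hexp
  have hexp_le := integral_le_of_lintegral_ofReal_le hmeas (hpos _) hK.le hexp
  have hbound : ∀ t ∈ Set.Ioo (0 : ℝ) 1, (∫⁻ ω, ENNReal.ofReal (Real.exp (t * X ω)) ∂μ) ≤
      ENNReal.ofReal (Real.exp (K * t ^ 2 / (1 - t))) := by
    rintro t ⟨ht0, ht1⟩
    rw [← ofReal_integral_eq_lintegral_ofReal (integrable_exp_mul_of_integrable_exp_abs_s9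
      hint.1 hexp_int (by rw [abs_of_pos ht0]; exact ht1.le)) (hpos _)]
    gcongr
    calc ∫ ω, Real.exp (t * X ω) ∂μ
        ≤ 1 + t * ∫ ω, X ω ∂μ + t ^ 2 / (1 - t) * ∫ ω, Real.exp |X ω| ∂μ :=
          integral_exp_mul_le hint hexp_int ht0.le ht1
      _ ≤ K * t ^ 2 / (1 - t) + 1 := by
          have : 0 ≤ t ^ 2 / (1 - t) := div_nonneg (sq_nonneg t) (by linarith)
          rw [mul_comm K, mul_div_right_comm]
          nlinarith
      _ ≤ Real.exp (K * t ^ 2 / (1 - t)) := Real.add_one_le_exp _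
  refine ⟨hbound, fun t ⟨ht0, ht⟩ => (hbound t ⟨ht0, by linarith⟩).trans ?_⟩
  gcongr
  rw [div_le_iff₀ (by linarith)]
  nlinarith [mul_pos hK (pow_pos ht0 2)]

/-- Lemma 2.5: if `E[X] ≤ 0` and `E[exp |X|] ≤ K`, then the Laplace transform of `X`
satisfies `E[exp (t X)] ≤ exp (K t² / (1 - t))` for `t ∈ (0,1)`, and consequently
`E[exp (t X)] ≤ exp (2 K t²)` for `t ∈ (0, 1/2]`. -/
theorem laplace_transform_bound_of_exponential_moment
    {Ω : Type*} {m0 : MeasurableSpace Ω} (μ : Measure Ω) [IsProbabilityMeasure μ]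
    (X : Ω → ℝ) (K : ℝ) (hK : 0 < K)
    (hmeas : Measurable X) (hint : Integrable X μ)
    (hmean : (∫ ω, X ω ∂μ) ≤ 0)
    (hexp : (∫⁻ ω, ENNReal.ofReal (Real.exp |X ω|) ∂μ) ≤ ENNReal.ofReal K) :
    (∀ t : ℝ, t ∈ Set.Ioo (0 : ℝ) 1 →
      (∫⁻ ω, ENNReal.ofReal (Real.exp (t * X ω)) ∂μ) ≤
        ENNReal.ofReal (Real.exp (K * t ^ 2 / (1 - t)))) ∧
    (∀ t : ℝ, t ∈ Set.Ioc (0 : ℝ) (1 / 2) →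
      (∫⁻ ω, ENNReal.ofReal (Real.exp (t * X ω)) ∂μ) ≤
        ENNReal.ofReal (Real.exp (2 * K * t ^ 2))) :=
  laplace_transform_bound_of_exponential_moment_general (m0 := m0) μ X K hK hint hmean hexp
end

section
/- Let (X_i)_{1≤i≤n} be a sequence of supermartingale differences adapted to a filtration (F_i). If there exist constants R > 0 and K > 0 such that for all i, almost surely E[exp(R X_i²) | F_{i-1}] ≤ K, then there exists a constant c > 0, depending only on R and K, such that E[exp(t S_n)] ≤ exp(n c t²) for all t > 0, and P[S_n/n > x] ≤ exp(−n x²/(4c)) for all x > 0. Conversely, if (X_i) are i.i.d. and P[S_n/n > x] ≤ exp(−n x²/(4c)) holds for some n ≥ 1, c > 0 and all x > 0, then for each R ∈ (0, 1/(4c)), E[exp(R (X_1^+)²)] ≤ 1 + R/(1/(4c) − R), where X_1^+ = max(X_1, 0). -/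
/-!
For `t² ≤ R`, `e^u ≤ u + e^{u²}` and convexity of `exp` give
`e^{tx} ≤ tx + e^{t²x²} ≤ tx + 1 + (t²/R)(e^{Rx²} - 1)`,
and for `t² > R` one uses `tx ≤ t²/(4R) + Rx²`; either way, taking conditional expectations
bounds `E[e^{tX_i} | F_{i-1}]` by `exp ((K + 1) t² / R)`. Conditioning successively on
`F_{n-1}, …, F_0` gives the Laplace bound with `c = (K + 1) / R`, and Chernoff's bound at
`t = x / (2c)` gives the deviation bound.

Conversely, independence and identical distribution give
`P[X_1 > x]ⁿ ≤ P[S_n / n > x] ≤ (e^{-x²/(4c)})ⁿ`, and the layer-cake formula turns this Gaussian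
tail of `X_1⁺` into `E[e^{R (X_1⁺)²}] ≤ 1 + ∫_1^∞ s^{-1/(4cR)} ds = 1 + R / (1/(4c) - R)`.
-/

open MeasureTheory ProbabilityTheory Filter Finset Real

namespace Real

lemma mul_le_sq_div_add_mul_sq {R : ℝ} (hR : 0 < R) (t x : ℝ) :
    t * x ≤ t ^ 2 / (4 * R) + R * x ^ 2 := by
  have : t ^ 2 / (4 * R) + R * x ^ 2 - t * x = (t - 2 * R * x) ^ 2 / (4 * R) := by
    field_simp; ring
  nlinarith [div_nonneg (sq_nonneg (t - 2 * R * x)) (by positivity : (0 : ℝ) ≤ 4 * R)]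

lemma exp_mul_le_exp_sq_div_mul_exp_mul_sq {R : ℝ} (hR : 0 < R) (t x : ℝ) :
    exp (t * x) ≤ exp (t ^ 2 / (4 * R)) * exp (R * x ^ 2) := by
  rw [← exp_add]
  exact exp_le_exp.2 (mul_le_sq_div_add_mul_sq hR t x)

lemma exp_le_add_exp_sq (x : ℝ) : exp x ≤ x + exp (x ^ 2) := by
  have hsq := add_one_le_exp (x ^ 2)
  rcases le_or_gt |x| 1 with hx | hx
  · have := (abs_le.1 (abs_exp_sub_one_sub_id_le hx)).2
    linarith
  rcases lt_abs.1 hx with hx | hx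
  · have : exp x ≤ exp (x ^ 2) := exp_le_exp.2 (by nlinarith)
    linarith
  · have : exp x ≤ 1 := exp_le_one_iff.2 (by linarith)
    nlinarith

lemma exp_mul_le_one_add_mul_exp_sub_one {s : ℝ} (hs₀ : 0 ≤ s) (hs₁ : s ≤ 1) (a : ℝ) :
    exp (s * a) ≤ 1 + s * (exp a - 1) := by
  have := convexOn_exp.2 (Set.mem_univ 0) (Set.mem_univ a) (sub_nonneg.2 hs₁) hs₀ (by ring)
  simp only [smul_eq_mul, mul_zero, zero_add, exp_zero, mul_one] at this
  linarith

lemma exp_sum_le_sum_exp_div {ι : Type*} (s : Finset ι) (f : ι → ℝ) (hs : s.Nonempty) :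
    exp (∑ i ∈ s, f i) ≤ ∑ i ∈ s, exp (#s * f i) / #s := by
  have hcard : (0 : ℝ) < #s := by exact_mod_cast hs.card_pos
  have := convexOn_exp.map_sum_le (t := s) (w := fun _ => (#s : ℝ)⁻¹) (p := fun i => #s * f i)
    (fun _ _ => by positivity) (by simp [hcard.ne']) (fun _ _ => Set.mem_univ _)
  simp only [smul_eq_mul, ← mul_assoc, inv_mul_cancel₀ hcard.ne', one_mul] at this
  simpa [div_eq_inv_mul] using this

end Real

section

variable {Ω : Type*} {m m0 : MeasurableSpace Ω} {μ : Measure Ω}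

lemma integrable_exp_mul_of_integrable_exp_mul_sq {f : Ω → ℝ} {R : ℝ} (hR : 0 < R)
    (hf : AEStronglyMeasurable f μ) (hfe : Integrable (fun ω => exp (R * f ω ^ 2)) μ) (t : ℝ) :
    Integrable (fun ω => exp (t * f ω)) μ := by
  refine (hfe.const_mul (exp (t ^ 2 / (4 * R)))).mono'
    (continuous_exp.comp_aestronglyMeasurable (hf.const_mul t)) (ae_of_all _ fun ω => ?_)
  rw [norm_of_nonneg (exp_pos _).le]
  exact exp_mul_le_exp_sq_div_mul_exp_mul_sq hR t (f ω)

lemma integrable_exp_mul_sum [IsFiniteMeasure μ] {ι : Type*} (s : Finset ι) {X : ι → Ω → ℝ}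
    (hX : ∀ i ∈ s, ∀ t : ℝ, Integrable (fun ω => exp (t * X i ω)) μ) (t : ℝ) :
    Integrable (fun ω => exp (t * ∑ i ∈ s, X i ω)) μ := by
  rcases s.eq_empty_or_nonempty with rfl | hs
  · simp
  have hprod : (fun ω => exp (t * ∑ i ∈ s, X i ω)) = ∏ i ∈ s, fun ω => exp (t * X i ω) := by
    ext ω
    simp [mul_sum, exp_sum]
  refine (integrable_finsetSum s fun i hi => (hX i hi (#s * t)).div_const (#s : ℝ)).mono' ?_
    (ae_of_all _ fun ω => ?_)
  · rw [hprod]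
    exact Finset.aestronglyMeasurable_prod s fun i hi => (hX i hi t).1
  · rw [norm_of_nonneg (exp_pos _).le, mul_sum]
    refine (exp_sum_le_sum_exp_div s (fun i => t * X i ω) hs).trans_eq (sum_congr rfl fun i _ => ?_)
    simp only [mul_assoc]

lemma condExp_exp_mul_le_of_sq_le [IsFiniteMeasure μ] (hm : m ≤ m0) {f : Ω → ℝ} {R K t : ℝ}
    (hR : 0 < R) (ht : 0 ≤ t) (htR : t ^ 2 ≤ R) (hf : Integrable f μ)
    (hfe : Integrable (fun ω => exp (R * f ω ^ 2)) μ)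
    (hf_cond : ∀ᵐ ω ∂μ, μ[f|m] ω ≤ 0)
    (hfe_cond : ∀ᵐ ω ∂μ, μ[fun ω => exp (R * f ω ^ 2)|m] ω ≤ K) :
    ∀ᵐ ω ∂μ, μ[fun ω => exp (t * f ω)|m] ω ≤ 1 + t ^ 2 / R * (K - 1) := by
  set s := t ^ 2 / R
  have hs₀ : 0 ≤ s := by positivity
  have hs₁ : s ≤ 1 := (div_le_one hR).2 htR
  set g : Ω → ℝ := (fun _ => 1 - s) + (t • f + s • fun ω => exp (R * f ω ^ 2))
  have hg : Integrable g μ := (integrable_const _).add ((hf.smul t).add (hfe.smul s))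
  have hle : (fun ω => exp (t * f ω)) ≤ᵐ[μ] g := ae_of_all _ fun ω => by
    have h₁ := exp_le_add_exp_sq (t * f ω)
    have h₂ := exp_mul_le_one_add_mul_exp_sub_one hs₀ hs₁ (R * f ω ^ 2)
    have h₃ : s * (R * f ω ^ 2) = (t * f ω) ^ 2 := by simp only [s]; field_simp
    rw [h₃] at h₂
    simp only [g, Pi.add_apply, Pi.smul_apply, smul_eq_mul]
    linarith
  have hg_cond : μ[g|m] =ᵐ[μ]
      fun ω => 1 - s + (t * μ[f|m] ω + s * μ[fun ω => exp (R * f ω ^ 2)|m] ω) := by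
    filter_upwards [condExp_add (integrable_const (1 - s)) ((hf.smul t).add (hfe.smul s)) m,
      condExp_add (hf.smul t) (hfe.smul s) m, condExp_smul t f m,
      condExp_smul s (fun ω => exp (R * f ω ^ 2)) m] with ω h₁ h₂ h₃ h₄
    simp only [g, h₁, Pi.add_apply, h₂, h₃, h₄, condExp_const hm, Pi.smul_apply, smul_eq_mul]
  have hexp := integrable_exp_mul_of_integrable_exp_mul_sq hR hf.1 hfe t
  filter_upwards [condExp_mono (m := m) hexp hg hle, hg_cond, hf_cond, hfe_cond]
    with ω h₁ h₂ h₃ h₄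
  rw [h₂] at h₁
  nlinarith [mul_nonpos_of_nonneg_of_nonpos ht h₃, mul_le_mul_of_nonneg_left h₄ hs₀]

lemma condExp_exp_mul_le_exp_sq_div_mul {f : Ω → ℝ} {R K : ℝ}
    (hR : 0 < R) (hf : AEStronglyMeasurable f μ) (hfe : Integrable (fun ω => exp (R * f ω ^ 2)) μ)
    (hfe_cond : ∀ᵐ ω ∂μ, μ[fun ω => exp (R * f ω ^ 2)|m] ω ≤ K) (t : ℝ) :
    ∀ᵐ ω ∂μ, μ[fun ω => exp (t * f ω)|m] ω ≤ exp (t ^ 2 / (4 * R)) * K := by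
  have hle : (fun ω => exp (t * f ω)) ≤ᵐ[μ] exp (t ^ 2 / (4 * R)) • fun ω => exp (R * f ω ^ 2) :=
    ae_of_all _ fun ω => exp_mul_le_exp_sq_div_mul_exp_mul_sq hR t (f ω)
  filter_upwards [condExp_mono (m := m) (integrable_exp_mul_of_integrable_exp_mul_sq hR hf hfe t)
    (hfe.smul _) hle, condExp_smul (m := m) (exp (t ^ 2 / (4 * R))) (fun ω => exp (R * f ω ^ 2)),
    hfe_cond] with ω h₁ h₂ h₃
  rw [h₂, Pi.smul_apply, smul_eq_mul] at h₁
  exact h₁.trans (mul_le_mul_of_nonneg_left h₃ (exp_pos _).le)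

lemma condExp_exp_mul_le [IsFiniteMeasure μ] (hm : m ≤ m0) {f : Ω → ℝ} {R K t : ℝ}
    (hR : 0 < R) (hK : 0 ≤ K) (ht : 0 ≤ t) (hf : Integrable f μ)
    (hfe : Integrable (fun ω => exp (R * f ω ^ 2)) μ)
    (hf_cond : ∀ᵐ ω ∂μ, μ[f|m] ω ≤ 0)
    (hfe_cond : ∀ᵐ ω ∂μ, μ[fun ω => exp (R * f ω ^ 2)|m] ω ≤ K) :
    ∀ᵐ ω ∂μ, μ[fun ω => exp (t * f ω)|m] ω ≤ exp ((K + 1) / R * t ^ 2) := by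
  rcases le_or_gt (t ^ 2) R with htR | htR
  · filter_upwards [condExp_exp_mul_le_of_sq_le hm hR ht htR hf hfe hf_cond hfe_cond] with ω h
    refine h.trans ((add_one_le_exp _).trans' ?_)
    have : (K + 1) / R * t ^ 2 - t ^ 2 / R * (K - 1) = 2 * (t ^ 2 / R) := by ring
    linarith [div_nonneg (sq_nonneg t) hR.le]
  · filter_upwards [condExp_exp_mul_le_exp_sq_div_mul hR hf.1 hfe hfe_cond t] with ω h
    refine h.trans ?_
    have hK' : K ≤ exp (K / R * t ^ 2) := by
      have : K ≤ K / R * t ^ 2 := by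
        rw [div_mul_eq_mul_div, le_div_iff₀ hR]
        nlinarith
      linarith [add_one_le_exp (K / R * t ^ 2)]
    calc exp (t ^ 2 / (4 * R)) * K ≤ exp (t ^ 2 / (4 * R)) * exp (K / R * t ^ 2) := by gcongr
      _ = exp (t ^ 2 / (4 * R) + K / R * t ^ 2) := (exp_add _ _).symm
      _ ≤ exp ((K + 1) / R * t ^ 2) := by
        rw [exp_le_exp]
        have : (K + 1) / R * t ^ 2 - (t ^ 2 / (4 * R) + K / R * t ^ 2) = 3 * t ^ 2 / (4 * R) := by
          field_simp; ring
        linarith [(by positivity : 0 ≤ 3 * t ^ 2 / (4 * R))]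

lemma integral_mul_le_mul_integral_of_condExp_le [IsFiniteMeasure μ] (hm : m ≤ m0) {F G : Ω → ℝ}
    {C : ℝ} (hF : StronglyMeasurable[m] F) (hF₀ : 0 ≤ F) (hF_int : Integrable F μ)
    (hG_int : Integrable G μ) (hFG_int : Integrable (F * G) μ) (hG : ∀ᵐ ω ∂μ, μ[G|m] ω ≤ C) :
    ∫ ω, F ω * G ω ∂μ ≤ C * ∫ ω, F ω ∂μ := by
  have hpull : μ[F * G|m] =ᵐ[μ] F * μ[G|m] :=
    condExp_mul_of_stronglyMeasurable_left hF hFG_int hG_int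
  calc ∫ ω, F ω * G ω ∂μ = ∫ ω, μ[F * G|m] ω ∂μ := (integral_condExp hm).symm
    _ = ∫ ω, F ω * μ[G|m] ω ∂μ := integral_congr_ae hpull
    _ ≤ ∫ ω, C * F ω ∂μ := by
      refine integral_mono_ae (integrable_condExp.congr hpull) (hF_int.const_mul C) ?_
      filter_upwards [hG] with ω h
      rw [mul_comm C]
      exact mul_le_mul_of_nonneg_left h (hF₀ ω)
    _ = C * ∫ ω, F ω ∂μ := integral_const_mul C F

lemma integral_prod_Icc_le_pow [IsProbabilityMeasure μ] (ℱ : Filtration ℕ m0) {Y : ℕ → Ω → ℝ}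
    {C : ℝ} (hC : 0 ≤ C) (n : ℕ) (hY_meas : ∀ i ∈ Icc 1 n, StronglyMeasurable[ℱ i] (Y i))
    (hY₀ : ∀ i ∈ Icc 1 n, 0 ≤ Y i) (hY_int : ∀ i ∈ Icc 1 n, Integrable (Y i) μ)
    (hY_prod_int : ∀ k ≤ n, Integrable (fun ω => ∏ i ∈ Icc 1 k, Y i ω) μ)
    (hY_cond : ∀ i ∈ Icc 1 n, ∀ᵐ ω ∂μ, μ[Y i|ℱ (i - 1)] ω ≤ C) :
    ∫ ω, ∏ i ∈ Icc 1 n, Y i ω ∂μ ≤ C ^ n := by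
  induction n with
  | zero => simp
  | succ n ih =>
    have hsub : Icc 1 n ⊆ Icc 1 (n + 1) := Icc_subset_Icc_right n.le_succ
    have hlast : n + 1 ∈ Icc 1 (n + 1) := by simp
    set F : Ω → ℝ := fun ω => ∏ i ∈ Icc 1 n, Y i ω
    have hF : StronglyMeasurable[ℱ n] F := by
      refine Finset.stronglyMeasurable_fun_prod (Icc 1 n) fun i hi => ?_
      exact (hY_meas i (hsub hi)).mono (ℱ.mono (mem_Icc.1 hi).2)
    simp_rw [prod_Icc_succ_top (Nat.le_add_left 1 n)]
    calc ∫ ω, F ω * Y (n + 1) ω ∂μ ≤ C * ∫ ω, F ω ∂μ :=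
          integral_mul_le_mul_integral_of_condExp_le (ℱ.le n) hF
            (fun ω => prod_nonneg fun i hi => hY₀ i (hsub hi) ω) (hY_prod_int n n.le_succ)
            (hY_int _ hlast) ?_ (by simpa using hY_cond _ hlast)
      _ ≤ C * C ^ n := by
        gcongr
        exact ih (fun i hi => hY_meas i (hsub hi)) (fun i hi => hY₀ i (hsub hi))
          (fun i hi => hY_int i (hsub hi)) (fun k hk => hY_prod_int k (hk.trans n.le_succ))
          (fun i hi => hY_cond i (hsub hi))
      _ = C ^ (n + 1) := (pow_succ' C n).symm
    have hFY := hY_prod_int (n + 1) le_rfl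
    simp_rw [prod_Icc_succ_top (Nat.le_add_left 1 n)] at hFY
    exact hFY

lemma integral_exp_mul_sum_le [IsProbabilityMeasure μ] (ℱ : Filtration ℕ m0) {X : ℕ → Ω → ℝ}
    {R K t : ℝ} (hR : 0 < R) (hK : 0 ≤ K) (ht : 0 ≤ t) (n : ℕ)
    (hX_meas : ∀ i ∈ Icc 1 n, StronglyMeasurable[ℱ i] (X i))
    (hX_int : ∀ i ∈ Icc 1 n, Integrable (X i) μ)
    (hX_cond : ∀ i ∈ Icc 1 n, ∀ᵐ ω ∂μ, μ[X i|ℱ (i - 1)] ω ≤ 0)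
    (hX_exp : ∀ i ∈ Icc 1 n, Integrable (fun ω => exp (R * X i ω ^ 2)) μ)
    (hX_exp_cond : ∀ i ∈ Icc 1 n, ∀ᵐ ω ∂μ, μ[fun ω => exp (R * X i ω ^ 2)|ℱ (i - 1)] ω ≤ K) :
    ∫ ω, exp (t * ∑ i ∈ Icc 1 n, X i ω) ∂μ ≤ exp (n * ((K + 1) / R) * t ^ 2) := by
  have hY_int : ∀ i ∈ Icc 1 n, ∀ s : ℝ, Integrable (fun ω => exp (s * X i ω)) μ := fun i hi =>
    integrable_exp_mul_of_integrable_exp_mul_sq hR (hX_int i hi).1 (hX_exp i hi)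
  have hprod : ∀ k, (fun ω => ∏ i ∈ Icc 1 k, exp (t * X i ω)) =
      fun ω => exp (t * ∑ i ∈ Icc 1 k, X i ω) := fun k => by
    simp only [mul_sum, exp_sum]
  calc ∫ ω, exp (t * ∑ i ∈ Icc 1 n, X i ω) ∂μ = ∫ ω, ∏ i ∈ Icc 1 n, exp (t * X i ω) ∂μ := by
        rw [hprod]
    _ ≤ exp ((K + 1) / R * t ^ 2) ^ n := by
      refine integral_prod_Icc_le_pow ℱ (exp_pos _).le n
        (fun i hi => continuous_exp.comp_stronglyMeasurable ((hX_meas i hi).const_mul t))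
        (fun i _ ω => (exp_pos _).le) (fun i hi => hY_int i hi t) (fun k hk => ?_)
        (fun i hi => condExp_exp_mul_le (ℱ.le _) hR hK ht (hX_int i hi) (hX_exp i hi)
          (hX_cond i hi) (hX_exp_cond i hi))
      rw [hprod]
      exact integrable_exp_mul_sum _ (fun i hi => hY_int i (Icc_subset_Icc_right hk hi)) t
    _ = exp (n * ((K + 1) / R) * t ^ 2) := by
      rw [← exp_nat_mul]
      ring_nf

lemma measure_ge_le_exp_neg_sq_of_integral_exp_le [IsFiniteMeasure μ] {Y : Ω → ℝ} {v ε : ℝ}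
    (hv : 0 < v) (hε : 0 < ε) (hY_int : ∀ t, 0 < t → Integrable (fun ω => exp (t * Y ω)) μ)
    (hY : ∀ t, 0 < t → ∫ ω, exp (t * Y ω) ∂μ ≤ exp (v * t ^ 2)) :
    μ {ω | ε ≤ Y ω} ≤ ENNReal.ofReal (exp (-(ε ^ 2 / (4 * v)))) := by
  -- the Chernoff bound at its optimal parameter `t = ε / (2v)`
  set t := ε / (2 * v)
  have ht : 0 < t := by positivity
  rw [ENNReal.le_ofReal_iff_toReal_le (measure_ne_top μ _) (exp_pos _).le]
  calc (μ {ω | ε ≤ Y ω}).toReal ≤ exp (-t * ε) * mgf Y μ t :=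
        measure_ge_le_exp_mul_mgf ε ht.le (hY_int t ht)
    _ ≤ exp (-t * ε) * exp (v * t ^ 2) := by gcongr; exact hY t ht
    _ = exp (-(ε ^ 2 / (4 * v))) := by
      rw [← exp_add]
      congr 1
      simp only [t]
      field_simp
      ring

lemma measure_lt_le_of_measure_sum_div_gt_le {n : ℕ} (hn : 1 ≤ n) {X : ℕ → Ω → ℝ}
    (hindep : iIndepFun (fun i : {i : ℕ // i ∈ Icc 1 n} => X i) μ)
    (hident : ∀ i ∈ Icc 1 n, IdentDistrib (X i) (X 1) μ μ) {x b : ℝ}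
    (h : μ {ω | (∑ i ∈ Icc 1 n, X i ω) / n > x} ≤ ENNReal.ofReal (exp (-(n * b)))) :
    μ {ω | x < X 1 ω} ≤ ENNReal.ofReal (exp (-b)) := by
  have hn₀ : (0 : ℝ) < n := by exact_mod_cast hn
  have hident' : ∀ i : {i : ℕ // i ∈ Icc 1 n}, μ (X i ⁻¹' Set.Ioi x) = μ {ω | x < X 1 ω} :=
    fun i => (hident i i.2).measure_mem_eq measurableSet_Ioi
  have hinter : (⋂ i ∈ (univ : Finset {i : ℕ // i ∈ Icc 1 n}), X i ⁻¹' Set.Ioi x) ⊆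
      {ω | (∑ i ∈ Icc 1 n, X i ω) / n > x} := by
    intro ω hω
    simp only [Set.mem_iInter, Set.mem_preimage, Set.mem_Ioi, mem_univ, forall_true_left,
      Subtype.forall] at hω
    have hsum := sum_lt_sum_of_nonempty ⟨1, by simp [hn]⟩ hω
    rw [sum_const, Nat.card_Icc, Nat.add_sub_cancel, nsmul_eq_mul] at hsum
    rw [Set.mem_ofPred_eq, gt_iff_lt, lt_div_iff₀ hn₀]
    linarith
  have hpow : μ {ω | x < X 1 ω} ^ n ≤ ENNReal.ofReal (exp (-b)) ^ n := calc
    μ {ω | x < X 1 ω} ^ n = ∏ i : {i : ℕ // i ∈ Icc 1 n}, μ (X i ⁻¹' Set.Ioi x) := by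
        simp [hident']
    _ = μ (⋂ i ∈ (univ : Finset {i : ℕ // i ∈ Icc 1 n}), X i ⁻¹' Set.Ioi x) :=
        (iIndepFun_iff_measure_inter_preimage_eq_mul.1 hindep univ
          fun _ _ => measurableSet_Ioi).symm
    _ ≤ ENNReal.ofReal (exp (-(n * b))) := (measure_mono hinter).trans h
    _ = ENNReal.ofReal (exp (-b)) ^ n := by
        rw [← ENNReal.ofReal_pow (exp_pos _).le, ← exp_nat_mul, mul_neg]
  exact (ENNReal.pow_le_pow_left_iff (by omega)).1 hpow

lemma lintegral_Ioi_one_rpow_neg {p : ℝ} (hp : 1 < p) :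
    ∫⁻ s in Set.Ioi (1 : ℝ), ENNReal.ofReal (s ^ (-p)) = ENNReal.ofReal (1 / (p - 1)) := by
  have hp' : -p < -1 := neg_lt_neg hp
  rw [← ofReal_integral_eq_lintegral_ofReal (integrableOn_Ioi_rpow_of_lt hp' zero_lt_one)
    ((ae_restrict_iff' measurableSet_Ioi).2 (ae_of_all _ fun s hs =>
      rpow_nonneg (zero_le_one.trans hs.le) _)), integral_Ioi_rpow_of_lt hp' zero_lt_one,
    one_rpow]
  congr 1
  rw [neg_div, ← div_neg, neg_add, neg_neg, add_comm]
  ring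

lemma measure_lt_exp_mul_sq_max_le {Y : Ω → ℝ} {a R s : ℝ} (hR : 0 < R) (hs : 1 < s)
    (htail : ∀ x, 0 < x → μ {ω | x < Y ω} ≤ ENNReal.ofReal (exp (-(a * x ^ 2)))) :
    μ {ω | s < exp (R * max (Y ω) 0 ^ 2)} ≤ ENNReal.ofReal (s ^ (-(a / R))) := by
  have hs₀ : 0 < s := zero_lt_one.trans hs
  have hlog : 0 < log s / R := div_pos (log_pos hs) hR
  set q := √(log s / R)
  have hq : 0 < q := sqrt_pos.2 hlog
  have hsub : {ω | s < exp (R * max (Y ω) 0 ^ 2)} ⊆ {ω | q < Y ω} := by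
    intro ω hω
    rw [Set.mem_ofPred_eq, ← log_lt_iff_lt_exp hs₀, ← div_lt_iff₀' hR] at hω
    have : q < max (Y ω) 0 := by
      simpa only [sqrt_sq (le_max_right _ _)] using sqrt_lt_sqrt hlog.le hω
    exact (lt_max_iff.1 this).resolve_right hq.not_gt
  calc μ {ω | s < exp (R * max (Y ω) 0 ^ 2)} ≤ μ {ω | q < Y ω} := measure_mono hsub
    _ ≤ ENNReal.ofReal (exp (-(a * q ^ 2))) := htail q hq
    _ = ENNReal.ofReal (s ^ (-(a / R))) := by
      rw [sq_sqrt hlog.le, rpow_def_of_pos hs₀]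
      congr 2
      ring

lemma lintegral_exp_mul_sq_max_le [IsProbabilityMeasure μ] {Y : Ω → ℝ} (hY : Measurable Y)
    {a R : ℝ} (hR : 0 < R) (hRa : R < a)
    (htail : ∀ x, 0 < x → μ {ω | x < Y ω} ≤ ENNReal.ofReal (exp (-(a * x ^ 2)))) :
    ∫⁻ ω, ENNReal.ofReal (exp (R * max (Y ω) 0 ^ 2)) ∂μ ≤ ENNReal.ofReal (1 + R / (a - R)) := by
  have hmeas : AEMeasurable (fun ω => exp (R * max (Y ω) 0 ^ 2)) μ := by fun_prop
  rw [lintegral_eq_lintegral_meas_lt μ (ae_of_all _ fun ω => (exp_pos _).le) hmeas,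
    ← Set.Ioc_union_Ioi_eq_Ioi zero_le_one,
    lintegral_union measurableSet_Ioi (Set.Ioc_disjoint_Ioi le_rfl),
    ENNReal.ofReal_add zero_le_one (div_pos hR (sub_pos.2 hRa)).le, ENNReal.ofReal_one]
  gcongr
  · calc ∫⁻ s in Set.Ioc (0 : ℝ) 1, μ {ω | s < exp (R * max (Y ω) 0 ^ 2)}
        ≤ ∫⁻ _ in Set.Ioc (0 : ℝ) 1, 1 := lintegral_mono fun _ => prob_le_one
      _ = 1 := by simp
  · calc ∫⁻ s in Set.Ioi (1 : ℝ), μ {ω | s < exp (R * max (Y ω) 0 ^ 2)}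
        ≤ ∫⁻ s in Set.Ioi (1 : ℝ), ENNReal.ofReal (s ^ (-(a / R))) :=
          setLIntegral_mono' measurableSet_Ioi fun s hs => measure_lt_exp_mul_sq_max_le hR hs htail
      _ = ENNReal.ofReal (R / (a - R)) := by
        rw [lintegral_Ioi_one_rpow_neg ((one_lt_div hR).2 hRa)]
        congr 1
        field_simp

end

/-- Theorem 2.7 (Hoeffding-type inequality): under the conditional condition
`E[exp (R X_i²) | F_{i-1}] ≤ K` for supermartingale differences, sub-Gaussian Laplace
and deviation bounds hold with a constant `c` depending only on `R` and `K`; conversely,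
for i.i.d. variables the Gaussian deviation bound implies an explicit exponential square
moment bound for the positive part of `X 1`. -/
theorem supermartingale_hoeffding_type_inequality :
    (∀ R K : ℝ, 0 < R → 0 < K →
      ∃ c : ℝ, 0 < c ∧
        ∀ {Ω : Type*} {m0 : MeasurableSpace Ω} (μ : Measure Ω), IsProbabilityMeasure μ →
        ∀ (ℱ : Filtration ℕ m0) (n : ℕ) (X : ℕ → Ω → ℝ), 1 ≤ n →
          (∀ i ∈ Finset.Icc 1 n, StronglyMeasurable[ℱ i] (X i)) →
          (∀ i ∈ Finset.Icc 1 n, Integrable (X i) μ) →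
          (∀ i ∈ Finset.Icc 1 n, ∀ᵐ ω ∂μ, (μ[X i|ℱ (i - 1)]) ω ≤ 0) →
          (∀ i ∈ Finset.Icc 1 n,
            Integrable (fun ω => Real.exp (R * (X i ω) ^ 2)) μ) →
          (∀ i ∈ Finset.Icc 1 n,
            ∀ᵐ ω ∂μ, (μ[fun ω' => Real.exp (R * (X i ω') ^ 2)|ℱ (i - 1)]) ω ≤ K) →
          (∀ t : ℝ, 0 < t →
            (∫⁻ ω, ENNReal.ofReal (Real.exp (t * ∑ i ∈ Finset.Icc 1 n, X i ω)) ∂μ) ≤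
              ENNReal.ofReal (Real.exp (n * c * t ^ 2))) ∧
          (∀ x : ℝ, 0 < x →
            μ {ω | (∑ i ∈ Finset.Icc 1 n, X i ω) / n > x} ≤
              ENNReal.ofReal (Real.exp (-(n * x ^ 2 / (4 * c)))))) ∧
    (∀ {Ω : Type*} {m0 : MeasurableSpace Ω} (μ : Measure Ω), IsProbabilityMeasure μ →
      ∀ (n : ℕ) (X : ℕ → Ω → ℝ) (c : ℝ), 1 ≤ n → 0 < c →
        (∀ i, Measurable (X i)) →
        iIndepFun
          (fun i : {i : ℕ // i ∈ Finset.Icc 1 n} => X i) μ →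
        (∀ i ∈ Finset.Icc 1 n, IdentDistrib (X i) (X 1) μ μ) →
        (∀ x : ℝ, 0 < x →
          μ {ω | (∑ i ∈ Finset.Icc 1 n, X i ω) / n > x} ≤
            ENNReal.ofReal (Real.exp (-(n * x ^ 2 / (4 * c))))) →
        ∀ R : ℝ, 0 < R → R < 1 / (4 * c) →
          (∫⁻ ω, ENNReal.ofReal (Real.exp (R * (max (X 1 ω) 0) ^ 2)) ∂μ) ≤
            ENNReal.ofReal (1 + R / (1 / (4 * c) - R))) := by
  refine ⟨fun R K hR hK => ⟨(K + 1) / R, by positivity, ?_⟩, ?_⟩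
  · intro Ω _ μ _ ℱ n X hn hX_meas hX_int hX_cond hX_exp hX_exp_cond
    have hn₀ : (0 : ℝ) < n := by exact_mod_cast hn
    have hint : ∀ t, Integrable (fun ω => exp (t * ∑ i ∈ Icc 1 n, X i ω)) μ :=
      integrable_exp_mul_sum _ fun i hi =>
        integrable_exp_mul_of_integrable_exp_mul_sq hR (hX_int i hi).1 (hX_exp i hi)
    have hmgf : ∀ t, 0 < t →
        ∫ ω, exp (t * ∑ i ∈ Icc 1 n, X i ω) ∂μ ≤ exp (n * ((K + 1) / R) * t ^ 2) :=
      fun t ht => integral_exp_mul_sum_le ℱ hR hK.le ht.le n hX_meas hX_int hX_cond hX_exp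
        hX_exp_cond
    refine ⟨fun t ht => ?_, fun x hx => ?_⟩
    · rw [← ofReal_integral_eq_lintegral_ofReal (hint t) (ae_of_all _ fun _ => (exp_pos _).le)]
      exact ENNReal.ofReal_le_ofReal (hmgf t ht)
    · calc μ {ω | (∑ i ∈ Icc 1 n, X i ω) / n > x}
          ≤ μ {ω | n * x ≤ ∑ i ∈ Icc 1 n, X i ω} := measure_mono fun ω hω =>
            ((lt_div_iff₀' hn₀).1 hω).le
        _ ≤ ENNReal.ofReal (exp (-((n * x) ^ 2 / (4 * (n * ((K + 1) / R)))))) :=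
            measure_ge_le_exp_neg_sq_of_integral_exp_le (by positivity) (by positivity)
              (fun t _ => hint t) fun t ht => (hmgf t ht).trans_eq (by ring_nf)
        _ = ENNReal.ofReal (exp (-(n * x ^ 2 / (4 * ((K + 1) / R))))) := by
            congr 3
            field_simp
  · intro Ω _ μ _ n X c hn hc hX_meas hindep hident hdev R hR hRc
    refine lintegral_exp_mul_sq_max_le (hX_meas 1) hR hRc fun x hx =>
      measure_lt_le_of_measure_sum_div_gt_le hn hindep hident ((hdev x hx).trans_eq ?_)
    congr 3
    ring
end
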